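/- Let X and Y be real Banach spaces and f : X → Y a locally Lipschitz map with a pseudo-Jacobian mapping Jf satisfying the chain rule condition on X. Suppose that ∫₀^∞ inf_{‖x‖≤ρ} sur Jf(x) dρ = ∞. Then f is a surjective map onto Y, open with linear rate at every x ∈ X, and for every r > 0 one has B(f(0); ϱ(r)) ⊆ f(B(0;r)), where ϱ(r) = ∫₀^r inf_{‖x‖≤ρ} sur Jf(x) dρ. -/

import Mathlib

open Filter Topology Metric Set MeasureTheory

noncomputable section

variable {X Y : Type*} [NormedAddCommGroup X] [NormedSpace ℝ X]
  [NormedAddCommGroup Y] [NormedSpace ℝ Y]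

/-- The upper right-hand Dini derivative of `φ` at `x` in the direction `v`. -/
def diniPlus (φ : X → ℝ) (x v : X) : ℝ :=
  Filter.limsup (fun t : ℝ => (φ (x + t • v) - φ x) / t) (𝓝[>] (0 : ℝ))

/-- `J` is a pseudo-Jacobian of `f` at `x`. -/
def IsPseudoJacobianAt (f : X → Y) (x : X) (J : Set (X →L[ℝ] Y)) : Prop :=
  J.Nonempty ∧ ∀ (y' : StrongDual ℝ Y) (v : X),
    diniPlus (fun z => y' (f z)) x v ≤ sSup ((fun T : X →L[ℝ] Y => y' (T v)) '' J)

/-- The Clarke generalized directional derivative of `φ` at `x` in the direction `v`. -/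
def clarkeDeriv (φ : X → ℝ) (x v : X) : ℝ :=
  Filter.limsup (fun p : X × ℝ => (φ (p.1 + p.2 • v) - φ p.1) / p.2)
    ((𝓝 x) ×ˢ (𝓝[>] (0 : ℝ)))

/-- The Clarke subdifferential of `φ` at `x`. -/
def clarkeSubdiff (φ : X → ℝ) (x : X) : Set (StrongDual ℝ X) :=
  {x' | ∀ v : X, x' v ≤ clarkeDeriv φ x v}

/-- `λ_F(x)`, the minimal norm of elements of the Clarke subdifferential of `F` at `x`. -/
def lambdaF (F : X → ℝ) (x : X) : ℝ :=
  sInf ((fun w : StrongDual ℝ X => ‖w‖) '' clarkeSubdiff F x)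

/-- The Banach constant `C(T) = inf {‖T* y*‖ : ‖y*‖ = 1}`. -/
def banachC (T : X →L[ℝ] Y) : ℝ :=
  sInf ((fun y' : StrongDual ℝ Y => ‖y'.comp T‖) '' {y' | ‖y'‖ = 1})

/-- The dual Banach constant `C*(T) = inf {‖T u‖ : ‖u‖ = 1}`. -/
def banachCStar (T : X →L[ℝ] Y) : ℝ :=
  sInf ((fun u : X => ‖T u‖) '' {u : X | ‖u‖ = 1})

/-- `sur Jf(x) = sup_{r>0} inf {C(T) : T ∈ co Jf(B(x;r))}`. -/
def surJ (Jf : X → Set (X →L[ℝ] Y)) (x : X) : ℝ :=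
  sSup {c : ℝ | ∃ r > (0 : ℝ),
    c = sInf (banachC '' convexHull ℝ (⋃ z ∈ ball x r, Jf z))}

/-- `inj Jf(x) = sup_{r>0} inf {C*(T) : T ∈ co Jf(B(x;r))}`. -/
def injJ (Jf : X → Set (X →L[ℝ] Y)) (x : X) : ℝ :=
  sSup {c : ℝ | ∃ r > (0 : ℝ),
    c = sInf (banachCStar '' convexHull ℝ (⋃ z ∈ ball x r, Jf z))}

/-- `Δ F_y(x) = ∂‖·‖(f(x)-y) ∘ co̅(Jf(x))`. -/
def DeltaF (f : X → Y) (Jf : X → Set (X →L[ℝ] Y)) (y : Y) (x : X) :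
    Set (StrongDual ℝ X) :=
  {w | ∃ y' ∈ clarkeSubdiff (fun z : Y => ‖z‖) (f x - y),
      ∃ T ∈ closure (convexHull ℝ (Jf x)), w = ContinuousLinearMap.comp y' T}

/-- The chain rule condition for the pseudo-Jacobian mapping `Jf` of `f` on `U`. -/
def ChainRuleCond (f : X → Y) (Jf : X → Set (X →L[ℝ] Y)) (U : Set X) : Prop :=
  ∀ x ∈ U, ∀ y : Y, y ≠ f x →
    IsClosed (StrongDual.toWeakDual '' DeltaF f Jf y x) ∧
    Convex ℝ (DeltaF f Jf y x) ∧
    IsPseudoJacobianAt (fun z : X => ‖f z - y‖) x (DeltaF f Jf y x)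

/-- The strong chain rule condition: the chain rule condition, `f` locally Lipschitz,
and `Δ F_y(x)` contains the Clarke subdifferential of `F_y` at `x`. -/
def StrongChainRuleCond (f : X → Y) (Jf : X → Set (X →L[ℝ] Y)) (U : Set X) : Prop :=
  ChainRuleCond f Jf U ∧
  (∀ x ∈ U, ∃ K : NNReal, ∃ t ∈ 𝓝 x, LipschitzOnWith K f t) ∧
  ∀ x ∈ U, ∀ y : Y, y ≠ f x →
    clarkeSubdiff (fun z : X => ‖f z - y‖) x ⊆ DeltaF f Jf y x

/-- `Jf` is regular at `x₀`. -/
def RegularAt (Jf : X → Set (X →L[ℝ] Y)) (x₀ : X) : Prop :=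
  (∃ r > (0 : ℝ), ∀ T ∈ convexHull ℝ (⋃ z ∈ ball x₀ r, Jf z),
      ∃ e : X ≃L[ℝ] Y, (e : X →L[ℝ] Y) = T) ∧
  surJ Jf x₀ = injJ Jf x₀ ∧ 0 < surJ Jf x₀

/-- The regularity index `reg Jf(x₀)`. -/
def regJ (Jf : X → Set (X →L[ℝ] Y)) (x₀ : X) : ℝ := surJ Jf x₀

/-- `f` is open with linear rate around `x₀`. -/
def OpenWithLinearRateAt (f : X → Y) (x₀ : X) : Prop :=
  ∃ V ∈ 𝓝 x₀, ∃ α > (0 : ℝ), ∀ x ∈ V, ∀ r > (0 : ℝ), ball x r ⊆ V →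
    ball (f x) (α * r) ⊆ f '' ball x r

/-- `h` is a weight: continuous, nondecreasing, nonnegative on `[0,∞)`,
with `∫₀^∞ dρ/(1+h(ρ)) = ∞`. -/
def IsWeight (h : ℝ → ℝ) : Prop :=
  ContinuousOn h (Ici 0) ∧ MonotoneOn h (Ici 0) ∧ (∀ ρ ∈ Ici (0 : ℝ), 0 ≤ h ρ) ∧
  ∫⁻ ρ in Ioi (0 : ℝ), ENNReal.ofReal (1 / (1 + h ρ)) = ⊤

/-- The weighted Chang–Palais–Smale condition for `F` with respect to the weight `h`. -/
def ChangPS (F : X → ℝ) (h : ℝ → ℝ) : Prop :=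
  ∀ u : ℕ → X, (∃ M : ℝ, ∀ n, |F (u n)| ≤ M) →
    Tendsto (fun n => lambdaF F (u n) * (1 + h ‖u n‖)) atTop (𝓝 0) →
    ∃ φ : ℕ → ℕ, StrictMono φ ∧ ∃ z : X, Tendsto ((fun n => u n) ∘ φ) atTop (𝓝 z)

/-- The local Lipschitz constant of `g` at `y`. -/
def lipConstAt (g : Y → X) (y : Y) : ℝ :=
  sInf {c : ℝ | ∃ r > (0 : ℝ), c = sSup {q : ℝ | ∃ u ∈ ball y r, ∃ w ∈ ball y r,
    u ≠ w ∧ q = ‖g u - g w‖ / ‖u - w‖}}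

/-! Ekeland's principle applied to `z ↦ ‖f z - y‖` on a closed ball gives a point `z` where this
function is `ε`-almost minimal. If `f z ≠ y`, the chain rule condition and a weak-* separation in
`X*` force `sur Jf(z) ≤ ε`; so `sur Jf ≥ m > ε` on `B(x₀;R)` yields `B(f x₀; mR) ⊆ f(B(x₀;R))`,
which is openness with linear rate. Chaining this along the radii `h, 2h, …, nh = r`, with
`m = inf_{‖x‖≤(k+1)h} sur Jf(x)` on the `k`-th step, covers the ball of radius `ϱ(r)` up to an
error `O(h)`, and surjectivity follows since `ϱ(r) → ∞`. -/

section Ekeland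

variable {α : Type*} [MetricSpace α] {F : α → ℝ} {ε : ℝ}

def ekelandSet (F : α → ℝ) (ε : ℝ) (u : α) : Set α := {w | F w + ε * dist w u ≤ F u}

theorem mem_ekelandSet_self (u : α) : u ∈ ekelandSet F ε u := by
  simp [ekelandSet]

theorem ekelandSet_subset_of_mem (hε : 0 ≤ ε) {u w : α} (hw : w ∈ ekelandSet F ε u) :
    ekelandSet F ε w ⊆ ekelandSet F ε u := fun w' hw' => by
  simp only [ekelandSet, mem_ofPred_eq] at hw hw' ⊢
  nlinarith [dist_triangle w' w u]

theorem isClosed_ekelandSet (hF : LowerSemicontinuous F) (u : α) :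
    IsClosed (ekelandSet F ε u) :=
  (hF.add (continuous_const.mul (continuous_id.dist continuous_const)).lowerSemicontinuous)
    |>.isClosed_preimage (F u)

theorem exists_ekelandSet_subset_closedBall (hF : BddBelow (range F)) (hε : 0 < ε) (u : α)
    {δ : ℝ} (hδ : 0 < δ) :
    ∃ w ∈ ekelandSet F ε u, ekelandSet F ε w ⊆ closedBall w (δ / ε) := by
  have hne : (F '' ekelandSet F ε u).Nonempty := ⟨F u, u, mem_ekelandSet_self u, rfl⟩
  obtain ⟨_, ⟨w, hw, rfl⟩, hlt⟩ := exists_lt_of_csInf_lt hne (lt_add_of_pos_right _ hδ)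
  refine ⟨w, hw, fun w' hw' => ?_⟩
  have hinf : sInf (F '' ekelandSet F ε u) ≤ F w' :=
    csInf_le (hF.mono (image_subset_range _ _)) ⟨w', ekelandSet_subset_of_mem hε.le hw hw', rfl⟩
  simp only [ekelandSet, mem_ofPred_eq] at hw'
  rw [mem_closedBall, le_div_iff₀ hε]
  linarith

theorem LowerSemicontinuous.exists_ekeland_point [CompleteSpace α] (hF : LowerSemicontinuous F)
    (hbdd : BddBelow (range F)) (x₀ : α) (hε : 0 < ε) :
    ∃ z, F z + ε * dist z x₀ ≤ F x₀ ∧ ∀ u, F z ≤ F u + ε * dist u z := by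
  choose next hnext_mem hnext_ball using fun (u : α) (n : ℕ) =>
    exists_ekelandSet_subset_closedBall hbdd hε u (pow_pos (one_half_pos (α := ℝ)) n)
  let x : ℕ → α := fun n => Nat.rec x₀ (fun n u => next u n) n
  let S : ℕ → Set α := fun n => ekelandSet F ε (x n)
  have hS_anti : Antitone S :=
    antitone_nat_of_succ_le fun n => ekelandSet_subset_of_mem hε.le (hnext_mem (x n) n)
  have hS_ball (n : ℕ) : S (n + 1) ⊆ closedBall (x (n + 1)) ((1 / 2) ^ n / ε) :=
    hnext_ball (x n) n
  have hdiam (n : ℕ) : diam (S (n + 1)) ≤ 2 * ((1 / 2) ^ n / ε) :=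
    (diam_mono (hS_ball n) isBounded_closedBall).trans (diam_closedBall (by positivity))
  have hdiam_lim : Tendsto (fun n : ℕ => 2 * ((1 / 2 : ℝ) ^ n / ε)) atTop (𝓝 0) := by
    simpa using ((tendsto_pow_atTop_nhds_zero_of_lt_one (r := (1 / 2 : ℝ)) (by norm_num)
      (by norm_num)).div_const ε |>.const_mul (2 : ℝ))
  obtain ⟨z, hz⟩ : (⋂ n, S (n + 1)).Nonempty := by
    refine nonempty_iInter_of_nonempty_biInter (fun n => isClosed_ekelandSet hF _)
      (fun n => isBounded_closedBall.subset (hS_ball n)) (fun N => ⟨x (N + 1), ?_⟩)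
      (squeeze_zero (fun n => diam_nonneg) hdiam hdiam_lim)
    exact mem_biInter fun n (hn : n ≤ N) =>
      hS_anti (by omega : n + 1 ≤ N + 1) (mem_ekelandSet_self _)
  rw [mem_iInter] at hz
  refine ⟨z, hS_anti (Nat.zero_le 1) (hz 0), fun u => ?_⟩
  by_contra! hu
  have hu_mem (n : ℕ) : u ∈ S (n + 1) :=
    ekelandSet_subset_of_mem hε.le (hz n) (show F u + ε * dist u z ≤ F z by linarith)
  have hdist : dist u z ≤ 0 := ge_of_tendsto' hdiam_lim fun n =>
    (dist_le_diam_of_mem (isBounded_closedBall.subset (hS_ball n)) (hu_mem n) (hz n)).trans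
      (hdiam n)
  rw [dist_le_zero.1 hdist, dist_self] at hu
  linarith

end Ekeland

instance : LocallyConvexSpace ℝ (WeakDual ℝ X) := WeakBilin.locallyConvexSpace

theorem WeakDual.exists_eval_eq (g : WeakDual ℝ X →L[ℝ] ℝ) :
    ∃ v : X, ∀ w : WeakDual ℝ X, g w = w v := by
  obtain ⟨v, hv⟩ := LinearMap.dualEmbedding_surjective (topDualPairing ℝ X) g
  exact ⟨v, fun w => by rw [← hv]; rfl⟩

theorem exists_separation_of_forall_lt_norm {Δ : Set (StrongDual ℝ X)} (hconv : Convex ℝ Δ)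
    (hclosed : IsClosed (StrongDual.toWeakDual '' Δ)) {ε : ℝ} (hε : 0 ≤ ε)
    (h : ∀ w ∈ Δ, ε < ‖w‖) :
    ∃ v : X, ∃ c : ℝ, ε * ‖v‖ < c ∧ ∀ w ∈ Δ, c < w v := by
  let K : Set (WeakDual ℝ X) := WeakDual.toStrongDual ⁻¹' closedBall 0 ε
  have hK : Convex ℝ K := (convex_closedBall 0 ε).linear_preimage
    (WeakDual.toStrongDual : WeakDual ℝ X ≃ₗ[ℝ] StrongDual ℝ X).toLinearMap
  have hΔ : Convex ℝ (StrongDual.toWeakDual '' Δ) := hconv.linear_image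
    (StrongDual.toWeakDual : StrongDual ℝ X ≃ₗ[ℝ] WeakDual ℝ X).toLinearMap
  have hdisj : Disjoint K (StrongDual.toWeakDual '' Δ) := by
    rw [disjoint_left]
    rintro _ hwK ⟨w, hw, rfl⟩
    exact (h w hw).not_ge (by simpa [K] using hwK)
  obtain ⟨g, u, c, hgK, huc, hgΔ⟩ :=
    geometric_hahn_banach_compact_closed hK (WeakDual.isCompact_closedBall 0 ε) hΔ hclosed hdisj
  obtain ⟨v, hv⟩ := WeakDual.exists_eval_eq g
  obtain ⟨φ, hφ, hφv⟩ := exists_dual_vector'' ℝ v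
  have hεφ : StrongDual.toWeakDual (ε • φ) ∈ K := by
    simpa [K, norm_smul, abs_of_nonneg hε] using mul_le_of_le_one_right hε hφ
  refine ⟨v, c, ?_, fun w hw => ?_⟩
  · have hεφv : (ε • φ) v = ε * ‖v‖ := by simpa using congrArg (ε * ·) hφv
    have := hgK _ hεφ
    rw [hv, StrongDual.coe_toWeakDual, hεφv] at this
    linarith
  · simpa [hv] using hgΔ _ ⟨w, hw, rfl⟩

theorem neg_mul_norm_le_diniPlus {F : X → ℝ} {x : X} {ε δ : ℝ} (hε : 0 ≤ ε) (hδ : 0 < δ)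
    (h : ∀ u ∈ ball x δ, F x ≤ F u + ε * ‖u - x‖) (v : X) :
    -(ε * ‖v‖) ≤ diniPlus F x v := by
  have hball : ∀ᶠ t in 𝓝[>] (0 : ℝ), x + t • v ∈ ball x δ :=
    ((continuous_const.add (continuous_id.smul continuous_const)).tendsto' 0 x (by simp)
      |>.mono_left nhdsWithin_le_nhds) (ball_mem_nhds x hδ)
  have hquot : ∀ᶠ t in 𝓝[>] (0 : ℝ), -(ε * ‖v‖) ≤ (F (x + t • v) - F x) / t := by
    filter_upwards [hball, self_mem_nhdsWithin] with t ht (htpos : 0 < t)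
    have := h _ ht
    rw [add_sub_cancel_left, norm_smul, Real.norm_of_nonneg htpos.le] at this
    rw [le_div_iff₀ htpos]
    linarith
  by_cases hbdd : IsBoundedUnder (· ≤ ·) (𝓝[>] (0 : ℝ)) fun t => (F (x + t • v) - F x) / t
  · exact le_limsup_of_frequently_le hquot.frequently hbdd
  · rw [diniPlus, Real.limsup_of_not_isBoundedUnder hbdd]
    exact neg_nonpos.2 (by positivity)

theorem clarkeDeriv_le_of_eventually {φ : Y → ℝ} {z v : Y} {a c : ℝ}
    (hlow : ∀ᶠ p in 𝓝 z ×ˢ 𝓝[>] (0 : ℝ), c ≤ (φ (p.1 + p.2 • v) - φ p.1) / p.2)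
    (hup : ∀ᶠ p in 𝓝 z ×ˢ 𝓝[>] (0 : ℝ), (φ (p.1 + p.2 • v) - φ p.1) / p.2 ≤ a) :
    clarkeDeriv φ z v ≤ a :=
  limsup_le_of_le (isCoboundedUnder_le_of_eventually_le _ hlow) hup

theorem eventually_abs_norm_quotient_le (z v : Y) :
    ∀ᶠ p in 𝓝 z ×ˢ 𝓝[>] (0 : ℝ), |(‖p.1 + p.2 • v‖ - ‖p.1‖) / p.2| ≤ ‖v‖ := by
  filter_upwards [prod_mem_prod univ_mem self_mem_nhdsWithin] with p hp
  have ht : 0 < p.2 := hp.2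
  rw [abs_div, abs_of_pos ht, div_le_iff₀ ht]
  calc _ ≤ ‖p.2 • v‖ := by simpa using abs_norm_sub_norm_le (p.1 + p.2 • v) p.1
    _ = ‖v‖ * p.2 := by rw [norm_smul, Real.norm_of_nonneg ht.le, mul_comm]

theorem clarkeDeriv_norm_le (z v : Y) : clarkeDeriv (‖·‖) z v ≤ ‖v‖ :=
  clarkeDeriv_le_of_eventually (c := -‖v‖)
    ((eventually_abs_norm_quotient_le z v).mono fun _ h => (abs_le.1 h).1)
    ((eventually_abs_norm_quotient_le z v).mono fun _ h => (abs_le.1 h).2)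

theorem clarkeDeriv_norm_neg_self_le (z : Y) : clarkeDeriv (‖·‖) z (-z) ≤ -‖z‖ := by
  refine le_of_forall_pos_le_add fun δ hδ => clarkeDeriv_le_of_eventually (c := -‖-z‖)
    ((eventually_abs_norm_quotient_le z (-z)).mono fun _ h => (abs_le.1 h).1) ?_
  filter_upwards [prod_mem_prod (ball_mem_nhds z (half_pos hδ))
    (Ioo_mem_nhdsGT (zero_lt_one' ℝ))] with p ⟨hp, ht0, ht1⟩
  rw [mem_ball, dist_eq_norm] at hp
  have hsplit : ‖p.1 + p.2 • -z‖ ≤ (1 - p.2) * ‖p.1‖ + p.2 * ‖p.1 - z‖ := by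
    calc ‖p.1 + p.2 • -z‖ = ‖(1 - p.2) • p.1 + p.2 • (p.1 - z)‖ := by congr 1; module
      _ ≤ _ := by
        refine (norm_add_le _ _).trans_eq ?_
        rw [norm_smul, norm_smul, Real.norm_of_nonneg (by linarith),
          Real.norm_of_nonneg ht0.le]
  have hz : ‖z‖ ≤ ‖p.1‖ + ‖p.1 - z‖ := by
    simpa [norm_sub_rev] using norm_le_norm_add_norm_sub' z p.1
  rw [div_le_iff₀ ht0]
  nlinarith

theorem norm_eq_one_of_mem_clarkeSubdiff_norm {z : Y} (hz : z ≠ 0) {y' : StrongDual ℝ Y}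
    (hy' : y' ∈ clarkeSubdiff (‖·‖) z) : ‖y'‖ = 1 := by
  refine le_antisymm (ContinuousLinearMap.opNorm_le_bound _ zero_le_one fun v => ?_) ?_
  · rw [one_mul, Real.norm_eq_abs, abs_le]
    have hneg := (hy' (-v)).trans (clarkeDeriv_norm_le z (-v))
    rw [map_neg, norm_neg] at hneg
    exact ⟨by linarith, (hy' v).trans (clarkeDeriv_norm_le z v)⟩
  · have hself := (hy' (-z)).trans (clarkeDeriv_norm_neg_self_le z)
    rw [map_neg, neg_le_neg_iff] at hself
    have hle := (le_abs_self _).trans (y'.le_opNorm z)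
    exact le_of_mul_le_mul_right (by linarith) (norm_pos_iff.2 hz)

theorem banachC_nonneg (T : X →L[ℝ] Y) : 0 ≤ banachC T :=
  Real.sInf_nonneg (by rintro _ ⟨y', -, rfl⟩; exact norm_nonneg _)

theorem banachC_le_norm_comp (T : X →L[ℝ] Y) {y' : StrongDual ℝ Y} (hy' : ‖y'‖ = 1) :
    banachC T ≤ ‖y'.comp T‖ :=
  csInf_le ⟨0, by rintro _ ⟨-, -, rfl⟩; exact norm_nonneg _⟩ ⟨y', hy', rfl⟩

theorem banachC_le_add_norm_sub [Nontrivial Y] (S T : X →L[ℝ] Y) :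
    banachC S ≤ banachC T + ‖S - T‖ := by
  obtain ⟨y₀, hy₀, -⟩ := exists_dual_vector' ℝ (0 : Y)
  rw [← sub_le_iff_le_add]
  refine le_csInf ⟨_, y₀, hy₀, rfl⟩ ?_
  rintro _ ⟨y', hy' : ‖y'‖ = 1, rfl⟩
  have hcomp : ‖y'.comp S‖ ≤ ‖y'.comp T‖ + ‖S - T‖ := by
    calc ‖y'.comp S‖ = ‖y'.comp T + y'.comp (S - T)‖ := by
          rw [ContinuousLinearMap.comp_sub, add_sub_cancel]
      _ ≤ ‖y'.comp T‖ + ‖y'‖ * ‖S - T‖ :=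
          (norm_add_le _ _).trans (by gcongr; exact y'.opNorm_comp_le _)
      _ = ‖y'.comp T‖ + ‖S - T‖ := by rw [hy', one_mul]
  linarith [banachC_le_norm_comp S hy']

theorem surJ_nonneg (Jf : X → Set (X →L[ℝ] Y)) (x : X) : 0 ≤ surJ Jf x :=
  Real.sSup_nonneg fun _ ⟨_, _, hc⟩ =>
    hc ▸ Real.sInf_nonneg (by rintro _ ⟨T, -, rfl⟩; exact banachC_nonneg T)

theorem surJ_le_banachC [Nontrivial Y] {Jf : X → Set (X →L[ℝ] Y)} {x : X} {T : X →L[ℝ] Y}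
    (hT : T ∈ closure (convexHull ℝ (Jf x))) : surJ Jf x ≤ banachC T := by
  refine Real.sSup_le ?_ (banachC_nonneg T)
  rintro _ ⟨r, hr, rfl⟩
  refine le_of_forall_pos_le_add fun η hη => ?_
  obtain ⟨S, hS, hST⟩ := Metric.mem_closure_iff.1 hT η hη
  have hSr : S ∈ convexHull ℝ (⋃ z ∈ ball x r, Jf z) :=
    convexHull_mono (subset_biUnion_of_mem (mem_ball_self hr)) hS
  have hinf : sInf (banachC '' convexHull ℝ (⋃ z ∈ ball x r, Jf z)) ≤ banachC S :=
    csInf_le ⟨0, by rintro _ ⟨U, -, rfl⟩; exact banachC_nonneg U⟩ ⟨S, hSr, rfl⟩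
  rw [dist_eq_norm, norm_sub_rev] at hST
  linarith [banachC_le_add_norm_sub S T]

theorem ChainRuleCond.mono {f : X → Y} {Jf : X → Set (X →L[ℝ] Y)} {U V : Set X}
    (hcr : ChainRuleCond f Jf V) (hUV : U ⊆ V) : ChainRuleCond f Jf U :=
  fun x hx => hcr x (hUV hx)

/-- If `sur Jf(x) > ε`, every element of `Δ F_y(x)` has norm `> ε`, and a direction weak-*
separating `Δ F_y(x)` from the `ε`-ball of `X*` is a direction of descent faster than `ε`. -/
theorem surJ_le_of_forall_le_add {f : X → Y} {Jf : X → Set (X →L[ℝ] Y)} {U : Set X}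
    (hcr : ChainRuleCond f Jf U) {x : X} (hx : x ∈ U) {y : Y} (hy : y ≠ f x) {ε δ : ℝ}
    (hε : 0 ≤ ε) (hδ : 0 < δ) (h : ∀ u ∈ ball x δ, ‖f x - y‖ ≤ ‖f u - y‖ + ε * ‖u - x‖) :
    surJ Jf x ≤ ε := by
  have : Nontrivial Y := nontrivial_of_ne _ _ hy
  obtain ⟨hclosed, hconv, hΔne, hpj⟩ := hcr x hx y hy
  by_contra! hlt
  have hnorm : ∀ w ∈ DeltaF f Jf y x, ε < ‖w‖ := by
    rintro _ ⟨y', hy', T, hT, rfl⟩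
    calc ε < surJ Jf x := hlt
      _ ≤ banachC T := surJ_le_banachC hT
      _ ≤ ‖y'.comp T‖ := banachC_le_norm_comp T
        (norm_eq_one_of_mem_clarkeSubdiff_norm (sub_ne_zero.2 hy.symm) hy')
  obtain ⟨v, c, hvc, hcΔ⟩ := exists_separation_of_forall_lt_norm hconv hclosed hε hnorm
  have hsup : sSup ((fun T : X →L[ℝ] ℝ => ContinuousLinearMap.id ℝ ℝ (T (-v))) ''
      DeltaF f Jf y x) ≤ -c := by
    refine csSup_le (hΔne.image _) ?_
    rintro _ ⟨w, hw, rfl⟩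
    simpa using (hcΔ w hw).le
  have hdini := (neg_mul_norm_le_diniPlus hε hδ h (-v)).trans ((hpj _ (-v)).trans hsup)
  rw [norm_neg] at hdini
  linarith

theorem ball_subset_image_ball_of_le_surJ [CompleteSpace X] {f : X → Y}
    {Jf : X → Set (X →L[ℝ] Y)} {x₀ : X} {R m : ℝ} (hf : ContinuousOn f (ball x₀ R))
    (hcr : ChainRuleCond f Jf (ball x₀ R)) (hm : 0 < m) (hsur : ∀ z ∈ ball x₀ R, m ≤ surJ Jf z) :
    ball (f x₀) (m * R) ⊆ f '' ball x₀ R := by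
  intro y hy
  rw [mem_ball', dist_eq_norm] at hy
  set D := ‖f x₀ - y‖
  obtain ⟨R', hDR', hR'R⟩ := exists_between ((div_lt_iff₀' hm).2 hy)
  have hR' : 0 < R' := (div_nonneg (norm_nonneg _) hm.le).trans_lt hDR'
  obtain ⟨ε, hDε, hεm⟩ := exists_between ((div_lt_iff₀ hR').2 ((div_lt_iff₀' hm).1 hDR'))
  have hε : 0 < ε := (div_nonneg (norm_nonneg _) hR'.le).trans_lt hDε
  set K := closedBall x₀ R'
  have hKR : K ⊆ ball x₀ R := closedBall_subset_ball hR'R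
  have : CompleteSpace K := isClosed_closedBall.completeSpace_coe
  have hFc : ContinuousOn (fun u => ‖f u - y‖) K := ((hf.mono hKR).sub continuousOn_const).norm
  obtain ⟨⟨z, hzK⟩, hz₀, hzmin⟩ := hFc.domRestrict.lowerSemicontinuous.exists_ekeland_point
    ⟨0, by rintro _ ⟨u, rfl⟩; exact norm_nonneg _⟩ ⟨x₀, mem_closedBall_self hR'.le⟩ hε
  simp only [domRestrict_apply, Subtype.dist_eq] at hz₀ hzmin
  refine ⟨z, hKR hzK, ?_⟩
  by_contra hfz
  have hzR' : dist z x₀ < R' := by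
    have hDε' : D < ε * R' := (div_lt_iff₀ hR').1 hDε
    nlinarith [norm_nonneg (f z - y)]
  have hnear : ∀ u ∈ ball z (R' - dist z x₀), ‖f z - y‖ ≤ ‖f u - y‖ + ε * ‖u - z‖ := by
    intro u hu
    have huK : u ∈ K := by
      rw [mem_closedBall]
      linarith [dist_triangle u z x₀, mem_ball.1 hu]
    simpa [dist_eq_norm] using hzmin ⟨u, huK⟩
  have hzε := surJ_le_of_forall_le_add hcr (hKR hzK) (Ne.symm hfz) hε.le (by linarith) hnear
  linarith [hsur z (hKR hzK)]

theorem openWithLinearRateAt_of_le_surJ [CompleteSpace X] {f : X → Y}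
    {Jf : X → Set (X →L[ℝ] Y)} {x₀ : X} {V : Set X} {m : ℝ} (hV : V ∈ 𝓝 x₀)
    (hf : ContinuousOn f V) (hcr : ChainRuleCond f Jf V) (hm : 0 < m)
    (hsur : ∀ z ∈ V, m ≤ surJ Jf z) : OpenWithLinearRateAt f x₀ :=
  ⟨V, hV, m, hm, fun _ _ _ _ hV' => ball_subset_image_ball_of_le_surJ (hf.mono hV')
    (hcr.mono hV') hm fun z hz => hsur z (hV' hz)⟩

theorem exists_near_of_ball_subset {K : Set Y} {c y : Y} {a b : ℝ} (hc : c ∈ K)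
    (hK : ball c a ⊆ K) (hb : 0 < b) (hy : y ∈ ball c (a + b)) : ∃ y' ∈ K, dist y y' < b := by
  by_cases hyc : dist y c < b
  · exact ⟨c, hc, hyc⟩
  have ha : 0 < a := by linarith [mem_ball.1 hy]
  rw [← add_zero c, ← ball_add_ball ha hb] at hy
  obtain ⟨y', hy', e, he, rfl⟩ := hy
  exact ⟨y', hK hy', by simpa using he⟩

theorem ball_add_mul_subset_image_ball [CompleteSpace X] {f : X → Y}
    {Jf : X → Set (X →L[ℝ] Y)} {x₀ : X} {s h a m : ℝ} (hf : ContinuousOn f (ball x₀ (s + h)))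
    (hcr : ChainRuleCond f Jf (ball x₀ (s + h))) (hs : 0 ≤ s) (hh : 0 < h)
    (hsur : ∀ z ∈ ball x₀ (s + h), m ≤ surJ Jf z) (ha : ball (f x₀) a ⊆ f '' ball x₀ s) :
    ball (f x₀) (a + m * h) ⊆ f '' ball x₀ (s + h) := by
  intro y hy
  rcases le_or_gt m 0 with hm | hm
  · exact image_mono (ball_subset_ball (by linarith)) (ha (ball_subset_ball (by nlinarith) hy))
  obtain ⟨_, ⟨x', hx', rfl⟩, hyx'⟩ := exists_near_of_ball_subset
    (mem_image_of_mem f (mem_closedBall_self hs))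
    (ha.trans (image_mono ball_subset_closedBall)) (mul_pos hm hh) hy
  have hx'h : ball x' h ⊆ ball x₀ (s + h) := by
    rw [add_comm]; exact ball_subset_ball' (by rw [mem_closedBall] at hx'; linarith)
  exact image_mono hx'h (ball_subset_image_ball_of_le_surJ (hf.mono hx'h) (hcr.mono hx'h) hm
    (fun z hz => hsur z (hx'h hz)) (mem_ball.2 hyx'))

theorem AntitoneOn.intervalIntegral_le_mul {g : ℝ → ℝ} {a b : ℝ} (hg : AntitoneOn g (Icc a b))
    (hab : a ≤ b) : ∫ ρ in a..b, g ρ ≤ g a * (b - a) := by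
  have hg' : AntitoneOn g (uIcc a b) := by rwa [uIcc_of_le hab]
  calc ∫ ρ in a..b, g ρ ≤ ∫ _ in a..b, g a :=
        intervalIntegral.integral_mono_on hab hg'.intervalIntegrable intervalIntegrable_const
          fun ρ hρ => hg (left_mem_Icc.2 hab) hρ hρ.1
    _ = g a * (b - a) := by simp [mul_comm]

theorem AntitoneOn.intervalIntegrable_zero {g : ℝ → ℝ} (hg : AntitoneOn g (Ici 0)) {b : ℝ}
    (hb : 0 ≤ b) : IntervalIntegrable g volume 0 b :=
  (hg.mono (by simp [uIcc_of_le hb, Icc_subset_Ici_self])).intervalIntegrable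

theorem tendsto_intervalIntegral_atTop_of_lintegral_eq_top {g : ℝ → ℝ}
    (hg : AntitoneOn g (Ici 0)) (hg0 : ∀ ρ, 0 ≤ g ρ)
    (hB : ∫⁻ ρ in Ioi (0 : ℝ), ENNReal.ofReal (g ρ) = ⊤) :
    Tendsto (fun r => ∫ ρ in 0..r, g ρ) atTop atTop := by
  have hmeas : AEMeasurable (fun ρ => ENNReal.ofReal (g ρ)) (volume.restrict (Ioi 0)) :=
    (aemeasurable_restrict_of_antitoneOn measurableSet_Ioi
      (hg.mono Ioi_subset_Ici_self)).ennreal_ofReal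
  have hlim := (aecover_Iic tendsto_id).lintegral_tendsto_of_countably_generated hmeas
  rw [hB] at hlim
  refine tendsto_atTop.2 fun C => ?_
  filter_upwards [hlim.eventually (lt_mem_nhds (ENNReal.ofReal_lt_top (r := C))),
    eventually_ge_atTop 0] with r hr hr0
  rw [Measure.restrict_restrict measurableSet_Iic, Iic_inter_Ioi, id_eq,
    ← ofReal_integral_eq_lintegral_ofReal (hg.intervalIntegrable_zero hr0).1 (ae_of_all _ hg0),
    ← intervalIntegral.integral_of_le hr0] at hr
  exact (ENNReal.ofReal_lt_ofReal_iff'.1 hr).1.le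

theorem pos_of_tendsto_intervalIntegral_atTop {g : ℝ → ℝ} (hg : AntitoneOn g (Ici 0))
    (hI : Tendsto (fun r => ∫ ρ in 0..r, g ρ) atTop atTop) {ρ : ℝ} (hρ : 0 ≤ ρ) : 0 < g ρ := by
  obtain ⟨r, hr, hρr⟩ :=
    ((hI.eventually_gt_atTop (∫ t in 0..ρ, g t)).and (eventually_ge_atTop ρ)).exists
  have hstep := (hg.mono (Icc_subset_Ici_iff hρr |>.2 hρ)).intervalIntegral_le_mul hρr
  rw [← intervalIntegral.integral_interval_sub_left (hg.intervalIntegrable_zero (hρ.trans hρr))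
    (hg.intervalIntegrable_zero hρ)] at hstep
  by_contra! hgρ
  nlinarith

section Covering

variable [CompleteSpace X] {f : X → Y} {Jf : X → Set (X →L[ℝ] Y)} {x₀ : X} {g : ℝ → ℝ} {r : ℝ}

/-- Each step of length `h` gains `g ((i + 1) h) h` while the integral grows by at most
`g (i h) h`; the differences telescope. -/
theorem ball_intervalIntegral_sub_subset_image_ball (hf : ContinuousOn f (ball x₀ r))
    (hcr : ChainRuleCond f Jf (ball x₀ r)) (hg : AntitoneOn g (Ici 0))
    (hsur : ∀ ρ, ∀ z ∈ ball x₀ ρ, g ρ ≤ surJ Jf z) {h : ℝ} (hh : 0 < h) :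
    ∀ k : ℕ, k * h ≤ r →
      ball (f x₀) ((∫ ρ in 0..k * h, g ρ) - (g 0 - g (k * h)) * h) ⊆ f '' ball x₀ (k * h) := by
  intro k
  induction k with
  | zero => simp
  | succ k ih =>
    intro hk
    have hs : (0 : ℝ) ≤ k * h := by positivity
    push_cast at hk ⊢
    rw [add_one_mul] at hk ⊢
    have hsub : ball x₀ (k * h + h) ⊆ ball x₀ r := ball_subset_ball hk
    refine (ball_subset_ball ?_).trans (ball_add_mul_subset_image_ball (hf.mono hsub)
      (hcr.mono hsub) hs hh (hsur _) (ih (by linarith)))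
    have hstep : ∫ ρ in k * h..k * h + h, g ρ ≤ g (k * h) * (k * h + h - k * h) :=
      (hg.mono (Icc_subset_Ici_iff (by linarith) |>.2 hs)).intervalIntegral_le_mul (by linarith)
    rw [← intervalIntegral.integral_interval_sub_left (hg.intervalIntegrable_zero (by positivity))
      (hg.intervalIntegrable_zero hs)] at hstep
    linarith

theorem ball_intervalIntegral_subset_image_ball (hf : ContinuousOn f (ball x₀ r))
    (hcr : ChainRuleCond f Jf (ball x₀ r)) (hg : AntitoneOn g (Ici 0))
    (hsur : ∀ ρ, ∀ z ∈ ball x₀ ρ, g ρ ≤ surJ Jf z) (hr : 0 < r) :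
    ball (f x₀) (∫ ρ in 0..r, g ρ) ⊆ f '' ball x₀ r := by
  intro y hy
  set δ := (∫ ρ in 0..r, g ρ) - dist y (f x₀)
  have hδ : 0 < δ := sub_pos.2 hy
  obtain ⟨n, hn⟩ := exists_nat_gt ((g 0 - g r) * r / δ)
  have hnr : ((n + 1 : ℕ) : ℝ) * (r / (n + 1)) = r := by push_cast; field_simp
  have hcover := ball_intervalIntegral_sub_subset_image_ball hf hcr hg hsur
    (by positivity : 0 < r / (n + 1)) (n + 1) hnr.le
  rw [hnr] at hcover
  refine hcover (mem_ball.2 ?_)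
  rw [div_lt_iff₀ hδ] at hn
  have : (g 0 - g r) * (r / (n + 1)) < δ := by
    rw [← mul_div_assoc, div_lt_iff₀ (by positivity)]
    nlinarith
  linarith

end Covering

def surInf (Jf : X → Set (X →L[ℝ] Y)) (ρ : ℝ) : ℝ :=
  sInf {c : ℝ | ∃ x : X, ‖x‖ ≤ ρ ∧ c = surJ Jf x}

theorem surInf_nonneg (Jf : X → Set (X →L[ℝ] Y)) (ρ : ℝ) : 0 ≤ surInf Jf ρ :=
  Real.sInf_nonneg fun _ ⟨x, _, hc⟩ => hc ▸ surJ_nonneg Jf x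

theorem bddBelow_surJ_setOf (Jf : X → Set (X →L[ℝ] Y)) (ρ : ℝ) :
    BddBelow {c : ℝ | ∃ x : X, ‖x‖ ≤ ρ ∧ c = surJ Jf x} :=
  ⟨0, fun _ ⟨x, _, hc⟩ => hc ▸ surJ_nonneg Jf x⟩

theorem surInf_le_surJ (Jf : X → Set (X →L[ℝ] Y)) {x : X} {ρ : ℝ} (hx : ‖x‖ ≤ ρ) :
    surInf Jf ρ ≤ surJ Jf x :=
  csInf_le (bddBelow_surJ_setOf Jf ρ) ⟨x, hx, rfl⟩

theorem antitoneOn_surInf (Jf : X → Set (X →L[ℝ] Y)) : AntitoneOn (surInf Jf) (Ici 0) :=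
  fun a ha _ _ hab => csInf_le_csInf (bddBelow_surJ_setOf Jf _) ⟨_, 0, by simpa using ha, rfl⟩
    fun _ ⟨x, hx, hc⟩ => ⟨x, hx.trans hab, hc⟩

theorem hadamard_global_surjection_general {X Y : Type*}
    [NormedAddCommGroup X] [NormedSpace ℝ X] [CompleteSpace X]
    [NormedAddCommGroup Y] [NormedSpace ℝ Y]
    (f : X → Y) (hf : LocallyLipschitz f)
    (Jf : X → Set (X →L[ℝ] Y))
    (hcr : ChainRuleCond f Jf Set.univ)
    (μ : ℝ → ℝ) (hμ : ∀ ρ : ℝ, μ ρ = sInf {c : ℝ | ∃ x : X, ‖x‖ ≤ ρ ∧ c = surJ Jf x})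
    (hB : ∫⁻ ρ in Ioi (0 : ℝ), ENNReal.ofReal (μ ρ) = ⊤) :
    Function.Surjective f ∧
    (∀ x : X, OpenWithLinearRateAt f x) ∧
    (∀ r > (0 : ℝ), ball (f 0) (∫ ρ in (0 : ℝ)..r, μ ρ) ⊆ f '' ball 0 r) := by
  obtain rfl : μ = surInf Jf := funext hμ
  have hfc := hf.continuous
  have hanti := antitoneOn_surInf Jf
  have hI := tendsto_intervalIntegral_atTop_of_lintegral_eq_top hanti (surInf_nonneg Jf) hB
  have hcover : ∀ r > (0 : ℝ), ball (f 0) (∫ ρ in 0..r, surInf Jf ρ) ⊆ f '' ball 0 r :=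
    fun r hr => ball_intervalIntegral_subset_image_ball hfc.continuousOn
      (hcr.mono (subset_univ _)) hanti
      (fun ρ z hz => surInf_le_surJ Jf (mem_ball_zero_iff.1 hz).le) hr
  refine ⟨fun y => ?_, fun x₀ => ?_, hcover⟩
  · obtain ⟨r, hyr, hr⟩ :=
      ((hI.eventually_gt_atTop (dist y (f 0))).and (eventually_gt_atTop 0)).exists
    obtain ⟨x, -, hx⟩ := hcover r hr hyr
    exact ⟨x, hx⟩
  · refine openWithLinearRateAt_of_le_surJ (ball_mem_nhds x₀ one_pos) hfc.continuousOn
      (hcr.mono (subset_univ _)) (pos_of_tendsto_intervalIntegral_atTop hanti hI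
        (by positivity : 0 ≤ ‖x₀‖ + 1)) fun z hz => surInf_le_surJ Jf ?_
    rw [mem_ball, dist_eq_norm] at hz
    linarith [norm_le_norm_add_norm_sub' z x₀]

/-- Hadamard-type global surjection: if `∫₀^∞ inf_{‖x‖≤ρ} sur Jf(x) dρ = ∞` then `f` is
surjective, open with linear rate at every point, and
`B(f(0); ∫₀^r inf_{‖x‖≤ρ} sur Jf(x) dρ) ⊆ f(B(0;r))` for all `r > 0`. -/
theorem hadamard_global_surjection {X Y : Type*}
    [NormedAddCommGroup X] [NormedSpace ℝ X] [CompleteSpace X]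
    [NormedAddCommGroup Y] [NormedSpace ℝ Y] [CompleteSpace Y]
    (f : X → Y) (hf : LocallyLipschitz f)
    (Jf : X → Set (X →L[ℝ] Y)) (hJf : ∀ x : X, IsPseudoJacobianAt f x (Jf x))
    (hcr : ChainRuleCond f Jf Set.univ)
    (μ : ℝ → ℝ) (hμ : ∀ ρ : ℝ, μ ρ = sInf {c : ℝ | ∃ x : X, ‖x‖ ≤ ρ ∧ c = surJ Jf x})
    (hB : ∫⁻ ρ in Ioi (0 : ℝ), ENNReal.ofReal (μ ρ) = ⊤) :
    Function.Surjective f ∧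
    (∀ x : X, OpenWithLinearRateAt f x) ∧
    (∀ r > (0 : ℝ), ball (f 0) (∫ ρ in (0 : ℝ)..r, μ ρ) ⊆ f '' ball 0 r) :=
  hadamard_global_surjection_general f hf Jf hcr μ hμ hB
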